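/- Let x >= 1, n >= 3, and let C_n(x) be the n-by-n reciprocal matrix with all above-diagonal entries equal to x. If a positive vector w = (w_1,...,w_n) satisfies w_3 <= w_1/x <= w_2 <= x w_3 and, for each i in {4,...,n}, (1/x) min{w_3,...,w_{i-1}} <= w_i <= w_1/x, then w is efficient for C_n(x). -/

import Mathlib

/-!
Write `p ⟶ q` when `w p ≤ A p q * w q`. If `v` dominates `w` entrywise, then along each such arc
the ratio `v / w` can only decrease: otherwise `v p / v q < w p / w q ≤ A p q`, so `v` would be
strictly worse than `w` at the entry `(p, q)`. Hence `v / w` is constant as soon as every index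
reaches every other one. For `Cₙ(x)`, with indices counted from 1, the hypotheses on `w` give the
cycle `1 ⟶ 2 ⟶ 3 ⟶ 1`, the arcs `i ⟶ 1` for `i ≥ 4`, and for each `i ≥ 4` an arc `j ⟶ i` from
an index `3 ≤ j < i`, so every index is reachable from `1` and reaches `1`.
-/

/-- A positive reciprocal (pairwise comparison) matrix. -/
def Reciprocal {n : ℕ} (A : Matrix (Fin n) (Fin n) ℝ) : Prop :=
  (∀ i j, 0 < A i j) ∧ ∀ i j, A j i = (A i j)⁻¹

/-- A positive vector `w` is efficient for `A` (Pareto optimality). -/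
def Efficient {n : ℕ} (A : Matrix (Fin n) (Fin n) ℝ) (w : Fin n → ℝ) : Prop :=
  (∀ i, 0 < w i) ∧ ∀ v : Fin n → ℝ, (∀ i, 0 < v i) →
    (∀ i j, |A i j - v i / v j| ≤ |A i j - w i / w j|) →
    ∀ i j, v i / v j = w i / w j

open Relation

section RatioArc

variable {n : ℕ} {A : Matrix (Fin n) (Fin n) ℝ} {w v : Fin n → ℝ}

/-- The digraph of Blanquero, Carrizosa and Conde, with its arcs reversed. -/
def RatioArc (A : Matrix (Fin n) (Fin n) ℝ) (w : Fin n → ℝ) (p q : Fin n) : Prop :=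
  w p ≤ A p q * w q

theorem div_le_div_of_ratioArc (hw : ∀ i, 0 < w i) (hv : ∀ i, 0 < v i) {p q : Fin n}
    (hdom : |A p q - v p / v q| ≤ |A p q - w p / w q|) (harc : RatioArc A w p q) :
    v q / w q ≤ v p / w p := by
  by_contra! hlt
  have hw_le : w p / w q ≤ A p q := (div_le_iff₀ (hw q)).2 harc
  have hv_lt : v p / v q < w p / w q := by
    rw [div_lt_div_iff₀ (hw p) (hw q)] at hlt
    rw [div_lt_div_iff₀ (hv q) (hw q)]
    linarith
  rw [abs_of_nonneg (sub_nonneg.2 hw_le)] at hdom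
  linarith [le_abs_self (A p q - v p / v q)]

theorem div_le_div_of_reflTransGen_ratioArc (hw : ∀ i, 0 < w i) (hv : ∀ i, 0 < v i)
    (hdom : ∀ i j, |A i j - v i / v j| ≤ |A i j - w i / w j|) {p q : Fin n}
    (hpq : ReflTransGen (RatioArc A w) p q) : v q / w q ≤ v p / w p := by
  induction hpq with
  | refl => exact le_rfl
  | tail _ harc ih => exact (div_le_div_of_ratioArc hw hv (hdom _ _) harc).trans ih

theorem efficient_of_reflTransGen_ratioArc (hw : ∀ i, 0 < w i)
    (hconn : ∀ i j, ReflTransGen (RatioArc A w) i j) : Efficient A w := by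
  refine ⟨hw, fun v hv hdom i j => ?_⟩
  have hij : v i / w i = v j / w j :=
    le_antisymm (div_le_div_of_reflTransGen_ratioArc hw hv hdom (hconn j i))
      (div_le_div_of_reflTransGen_ratioArc hw hv hdom (hconn i j))
  rw [div_eq_div_iff (hw i).ne' (hw j).ne'] at hij
  rw [div_eq_div_iff (hv j).ne' (hw j).ne']
  linarith

end RatioArc

/-- A class of efficient vectors for the constant reciprocal matrix `Cₙ(x)`
with all above-diagonal entries equal to `x ≥ 1`. -/
theorem stmt_17 {n : ℕ} (hn : 3 ≤ n) (x : ℝ) (hx : 1 ≤ x)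
    (C : Matrix (Fin n) (Fin n) ℝ)
    (hC : ∀ i j : Fin n, C i j =
      if i.val < j.val then x else if j.val < i.val then x⁻¹ else 1)
    (w : Fin n → ℝ) (hw : ∀ i, 0 < w i)
    (h3 : w ⟨2, by omega⟩ ≤ w ⟨0, by omega⟩ / x ∧
      w ⟨0, by omega⟩ / x ≤ w ⟨1, by omega⟩ ∧
      w ⟨1, by omega⟩ ≤ x * w ⟨2, by omega⟩)
    (hext : ∀ i : Fin n, 3 ≤ i.val →
      (∃ j : Fin n, 2 ≤ j.val ∧ j.val < i.val ∧ w j ≤ x * w i) ∧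
      w i ≤ w ⟨0, by omega⟩ / x) :
    Efficient C w := by
  have hx0 : 0 < x := one_pos.trans_le hx
  have arc_up {p q : Fin n} (hpq : p.val < q.val) (h : w p ≤ x * w q) : RatioArc C w p q := by
    rwa [RatioArc, hC, if_pos hpq]
  have arc_down {p q : Fin n} (hqp : q.val < p.val) (h : w p ≤ w q / x) : RatioArc C w p q := by
    rwa [RatioArc, hC, if_neg hqp.not_gt, if_pos hqp, inv_mul_eq_div]
  have arc01 : RatioArc C w ⟨0, by omega⟩ ⟨1, by omega⟩ :=
    arc_up (by simp) ((div_le_iff₀' hx0).1 h3.2.1)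
  have arc12 : RatioArc C w ⟨1, by omega⟩ ⟨2, by omega⟩ := arc_up (by simp) h3.2.2
  have arc20 : RatioArc C w ⟨2, by omega⟩ ⟨0, by omega⟩ := arc_down (by simp) h3.1
  have to_zero (i : Fin n) : ReflTransGen (RatioArc C w) i ⟨0, by omega⟩ := by
    rcases i with ⟨_ | _ | _ | k, hk⟩
    · exact .refl
    · exact .head arc12 (.single arc20)
    · exact .single arc20
    · exact .single (arc_down (by simp) (hext _ (by simp)).2)
  have from_zero (i : Fin n) : ReflTransGen (RatioArc C w) ⟨0, by omega⟩ i := by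
    induction i using WellFoundedLT.induction with
    | _ i ih =>
      rcases i with ⟨_ | _ | _ | k, hk⟩
      · exact .refl
      · exact .single arc01
      · exact .tail (.single arc01) arc12
      · obtain ⟨j, -, hji, hj⟩ := (hext ⟨k + 1 + 1 + 1, hk⟩ (by simp)).1
        exact .tail (ih j hji) (arc_up hji hj)
  exact efficient_of_reflTransGen_ratioArc hw fun i j => (to_zero i).trans (from_zero j)
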